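/- For n ≥ 1, let fₙ = x₁^{3n−1} + ⋯ + xₙ^{3n−1} + (x₁·x₂·⋯·xₙ)³ ∈ ℝ[[x₁,…,xₙ]] with Jacobian ideal Δ(fₙ). Then (x₁·x₂·⋯·xₙ)^{3n−1} ∈ Δ(fₙ), while (x₁·x₂·⋯·xₙ)^{3(n−1)} ∉ Δ(fₙ). -/

import Mathlib

/-- The `i`-th formal partial derivative of a multivariate formal power series over `ℝ`. -/
noncomputable def mvPderiv {n : ℕ} (i : Fin n) (f : MvPowerSeries (Fin n) ℝ) :
    MvPowerSeries (Fin n) ℝ :=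
  fun m => (m i + 1 : ℝ) * MvPowerSeries.coeff (m + Finsupp.single i 1) f

/-- The Jacobian ideal Δ(f), generated by the formal partial derivatives of `f`. -/
noncomputable def jacobianIdeal {n : ℕ} (f : MvPowerSeries (Fin n) ℝ) :
    Ideal (MvPowerSeries (Fin n) ℝ) :=
  Ideal.span (Set.range fun i => mvPderiv i f)

/-- `fₙ = x₁^{3n−1} + ⋯ + xₙ^{3n−1} + (x₁⋯xₙ)³`. -/
noncomputable def fExample (n : ℕ) : MvPowerSeries (Fin n) ℝ :=
  (∑ i : Fin n, MvPowerSeries.X i ^ (3 * n - 1)) + (∏ i : Fin n, MvPowerSeries.X i) ^ 3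

/-!
Write `n = m + 1`, `P = x₁⋯xₙ` and `x^{wᵢ} = P³ / xᵢ`, so that
`∂ᵢf = (3m+2) xᵢ^{3m+1} + 3 x^{wᵢ}`.

Membership: modulo `Δ(f)` we have `(3m+2) xᵢ^{3m+1} ≡ -3 x^{wᵢ}`; multiplying these `n`
congruences gives `(3m+2)ⁿ P^{3m+1} ≡ (-3)ⁿ P^{3m+2}`, so `P^{3m+1}` times the unit
`(3m+2)ⁿ - (-3)ⁿ P` lies in `Δ(f)`.

Non-membership: a finitely supported weight `α` defines the functional
`λ(h) = ∑ α(u) coeff_u(h)`, and `λ(g ∂ᵢf) = 0` for all `g` as soon as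
`(3m+2) α(v + (3m+1)eᵢ) + 3 α(v + wᵢ) = 0` for all `v`. Since
`(3m+1)eᵢ - wᵢ = (3m+2)eᵢ - 3·𝟙`, this recursion is solved by
`α(3m·𝟙 + (3m+2)k - 3|k|·𝟙) = (-3/(3m+2))^{|k|}` and `α = 0` elsewhere.
Then `λ` vanishes on `Δ(f)` while `λ(P^{3m}) = α(3m·𝟙) = 1`.
-/

open MvPowerSeries Finsupp

namespace Ideal

theorem prod_sub_prod_neg_mem {R ι : Type*} [CommRing R] {I : Ideal R} {s : Finset ι}
    {a b : ι → R} (h : ∀ i ∈ s, a i + b i ∈ I) : ∏ i ∈ s, a i - ∏ i ∈ s, -b i ∈ I := by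
  rw [← Ideal.Quotient.eq, map_prod, map_prod]
  refine Finset.prod_congr rfl fun i hi => ?_
  rw [Ideal.Quotient.eq, sub_neg_eq_add]
  exact h i hi

theorem map_eq_zero_of_mem_span {A M F : Type*} [CommSemiring A] [AddCommMonoid M]
    [FunLike F A M] [AddMonoidHomClass F A M] (ℓ : F) {S : Set A}
    (hS : ∀ s ∈ S, ∀ g, ℓ (g * s) = 0) {h : A} (hh : h ∈ Ideal.span S) : ℓ h = 0 := by
  suffices ∀ g, ℓ (g * h) = 0 by simpa using this 1
  induction hh using Submodule.span_induction with
  | mem s hs => exact hS s hs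
  | zero => simp
  | add x y _ _ hx hy => intro g; rw [mul_add, map_add, hx, hy, add_zero]
  | smul a x _ hx => intro g; rw [smul_eq_mul, ← mul_assoc]; exact hx _

end Ideal

namespace MvPowerSeries

variable {σ R : Type*} [CommSemiring R]

noncomputable def coeffPairing : ((σ →₀ ℕ) →₀ R) →ₗ[R] MvPowerSeries σ R →ₗ[R] R :=
  Finsupp.linearCombination R fun u => coeff u

theorem coeffPairing_apply (α : (σ →₀ ℕ) →₀ R) (h : MvPowerSeries σ R) :
    coeffPairing α h = α.sum fun u a => a * coeff u h := by
  simp [coeffPairing, Finsupp.linearCombination_apply, Finsupp.sum]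

theorem coeffPairing_monomial (α : (σ →₀ ℕ) →₀ R) (d : σ →₀ ℕ) (c : R) :
    coeffPairing α (monomial d c) = α d * c := by
  classical
  by_cases h : α d = 0 <;> simp [coeffPairing_apply, coeff_monomial, Finsupp.sum, h]

theorem coeffPairing_mul_monomial (α : (σ →₀ ℕ) →₀ R) (g : MvPowerSeries σ R)
    (w : σ →₀ ℕ) (c : R) :
    coeffPairing α (g * monomial w c)
      = c * coeffPairing (α.comapDomain (· + w) (add_left_injective w).injOn) g := by
  classical
  simp only [coeffPairing_apply, coeff_mul_monomial, Finsupp.sum, comapDomain_support,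
    comapDomain_apply, Finset.mul_sum]
  rw [← Finset.sum_preimage (· + w) α.support (add_left_injective w).injOn]
  · refine Finset.sum_congr rfl fun v _ => ?_
    rw [if_pos le_add_self, add_tsub_cancel_right]
    ring
  · rintro u - hu
    rw [if_neg fun hwu => hu ⟨u - w, tsub_add_cancel_of_le hwu⟩, mul_zero]

end MvPowerSeries

section Derivative

variable {n : ℕ}

theorem coeff_mvPderiv (i : Fin n) (f : MvPowerSeries (Fin n) ℝ) (u : Fin n →₀ ℕ) :
    coeff u (mvPderiv i f) = (u i + 1 : ℝ) * coeff (u + single i 1) f :=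
  rfl

theorem mvPderiv_add (i : Fin n) (f g : MvPowerSeries (Fin n) ℝ) :
    mvPderiv i (f + g) = mvPderiv i f + mvPderiv i g := by
  ext u
  simp only [coeff_mvPderiv, map_add, mul_add]

theorem mvPderiv_sum {ι : Type*} (s : Finset ι) (i : Fin n) (f : ι → MvPowerSeries (Fin n) ℝ) :
    mvPderiv i (∑ j ∈ s, f j) = ∑ j ∈ s, mvPderiv i (f j) :=
  map_sum (AddMonoidHom.mk' (mvPderiv i) (mvPderiv_add i)) f s

theorem mvPderiv_monomial (i : Fin n) (d : Fin n →₀ ℕ) (c : ℝ) :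
    mvPderiv i (monomial d c) = monomial (d - single i 1) (d i * c) := by
  classical
  ext u
  rw [coeff_mvPderiv, coeff_monomial, coeff_monomial]
  by_cases hu : u + single i 1 = d
  · subst hu
    simp
  · rw [if_neg hu, mul_zero, eq_comm, ite_eq_right_iff]
    rintro rfl
    have hdi : d i = 0 := by
      by_contra h
      exact hu (tsub_add_cancel_of_le (single_le_iff.2 (Nat.one_le_iff_ne_zero.2 h)))
    simp [hdi]

theorem mvPderiv_X_pow (i j : Fin n) (e : ℕ) :
    mvPderiv i (X j ^ e) = if j = i then monomial (single i (e - 1)) (e : ℝ) else 0 := by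
  rw [X_pow_eq, mvPderiv_monomial]
  split_ifs with h
  · subst h
    simp [← single_tsub]
  · simp [single_eq_of_ne' h]

end Derivative

section Exponents

variable {σ : Type*} [Fintype σ] {m : ℕ}

noncomputable def diagExp (e : ℕ) : σ →₀ ℕ := ∑ j, single j e

@[simp]
theorem diagExp_apply (e : ℕ) (j : σ) : diagExp e j = e := by
  classical
  simp [diagExp, finsetSum_apply, single_apply]

theorem diagExp_add (a b : ℕ) : (diagExp (a + b) : σ →₀ ℕ) = diagExp a + diagExp b := by
  ext j; simp

theorem degree_diagExp (e : ℕ) : (diagExp e : σ →₀ ℕ).degree = Fintype.card σ * e := by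
  simp [degree_eq_sum]

theorem prod_X_pow {R : Type*} [CommSemiring R] (e : ℕ) :
    (∏ i, (X i : MvPowerSeries σ R)) ^ e = monomial (diagExp e) 1 := by
  simp_rw [← Finset.prod_pow, X_pow_eq, prod_monomial, Finset.prod_const_one, diagExp]

noncomputable def cofactorExp (i : σ) : σ →₀ ℕ := diagExp 3 - single i 1

theorem cofactorExp_add_single (i : σ) : cofactorExp i + single i 1 = diagExp 3 :=
  tsub_add_cancel_of_le (single_le_iff.2 (by simp))

theorem degree_cofactorExp (i : Fin (m + 1)) : (cofactorExp i).degree = 3 * m + 2 := by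
  have h := congrArg degree (cofactorExp_add_single i)
  rw [map_add, degree_single, degree_diagExp, Fintype.card_fin] at h
  omega

theorem sum_cofactorExp : ∑ i : Fin (m + 1), cofactorExp i = diagExp (3 * m + 2) := by
  refine add_right_cancel (b := diagExp 1) ?_
  calc ∑ i, cofactorExp i + diagExp 1 = ∑ i : Fin (m + 1), (cofactorExp i + single i 1) :=
        Finset.sum_add_distrib.symm
    _ = diagExp (3 * m + 2) + diagExp 1 := by
        ext j
        simp only [cofactorExp_add_single, Finset.sum_const, Finset.card_univ, Fintype.card_fin,
          coe_smul, Pi.smul_apply, diagExp_apply, smul_eq_mul, coe_add, Pi.add_apply]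
        ring

end Exponents

theorem mvPderiv_fExample (m : ℕ) (i : Fin (m + 1)) :
    mvPderiv i (fExample (m + 1))
      = monomial (single i (3 * m + 1)) (3 * m + 2 : ℝ) + monomial (cofactorExp i) 3 := by
  rw [fExample, show 3 * (m + 1) - 1 = 3 * m + 2 by omega, mvPderiv_add, mvPderiv_sum,
    prod_X_pow, mvPderiv_monomial, diagExp_apply,
    Finset.sum_eq_single_of_mem i (Finset.mem_univ i) fun j _ hj => by
      rw [mvPderiv_X_pow, if_neg hj],
    mvPderiv_X_pow, if_pos rfl, cofactorExp]
  norm_num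

theorem prod_X_pow_mem_jacobianIdeal (m : ℕ) :
    (∏ i : Fin (m + 1), (X i : MvPowerSeries (Fin (m + 1)) ℝ)) ^ (3 * m + 1)
      ∈ jacobianIdeal (fExample (m + 1)) := by
  set P : MvPowerSeries (Fin (m + 1)) ℝ := ∏ i, X i
  have hrel := Ideal.prod_sub_prod_neg_mem (I := jacobianIdeal (fExample (m + 1)))
    (s := Finset.univ) (a := fun i => monomial (single i (3 * m + 1)) (3 * m + 2 : ℝ))
    (b := fun i => monomial (cofactorExp i) 3) fun i _ => by
      rw [← mvPderiv_fExample]; exact Ideal.subset_span ⟨i, rfl⟩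
  simp only [← map_neg, prod_monomial, sum_cofactorExp (m := m)] at hrel
  set a : ℝ := ∏ i : Fin (m + 1), (3 * m + 2 : ℝ)
  set b : ℝ := ∏ i : Fin (m + 1), (-3 : ℝ)
  have hfactor : monomial (∑ i : Fin (m + 1), single i (3 * m + 1)) a
      - monomial (diagExp (3 * m + 2)) b = P ^ (3 * m + 1) * (C a - C b * P) := by
    have hP (e : ℕ) : P ^ e = monomial (diagExp e) 1 := prod_X_pow e
    rw [hP, ← pow_one P, hP, ← monomial_zero_eq_C_apply, ← monomial_zero_eq_C_apply, mul_sub,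
      monomial_mul_monomial, monomial_mul_monomial, monomial_mul_monomial]
    simp only [add_zero, zero_add, mul_one, one_mul, ← diagExp_add]
    rfl
  have hunit : IsUnit (C a - C b * P) := by
    have hP0 : constantCoeff P = 0 := by simp [P]
    rw [isUnit_iff_constantCoeff, map_sub, map_mul, constantCoeff_C, constantCoeff_C, hP0,
      mul_zero, sub_zero, isUnit_iff_ne_zero]
    positivity
  rwa [hfactor, Ideal.mul_unit_mem_iff_mem _ hunit] at hrel

section DualFunctional

variable (m : ℕ)

-- `u = 3m·𝟙 + (3m+2)k - 3|k|·𝟙`, written without truncated subtraction.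
def IsDualExp (u k : Fin (m + 1) →₀ ℕ) : Prop :=
  ∀ j, u j + 3 * k.degree = 3 * m + (3 * m + 2) * k j

variable {m}

theorem IsDualExp.degree_add {u k : Fin (m + 1) →₀ ℕ} (h : IsDualExp m u k) :
    u.degree + k.degree = 3 * m * (m + 1) := by
  have hsum := Finset.sum_congr rfl fun j (_ : j ∈ Finset.univ) => h j
  simp only [Finset.sum_add_distrib, Finset.sum_const, Finset.card_univ, Fintype.card_fin,
    smul_eq_mul, ← Finset.mul_sum, ← degree_eq_sum] at hsum
  nlinarith

theorem isDualExp_add_single_iff {u u' k : Fin (m + 1) →₀ ℕ} {i : Fin (m + 1)}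
    (huu' : u + diagExp 3 = u' + single i (3 * m + 2)) :
    IsDualExp m u (k + single i 1) ↔ IsDualExp m u' k := by
  refine forall_congr' fun j => ?_
  have hj := DFunLike.congr_fun huu' j
  simp only [coe_add, Pi.add_apply, diagExp_apply, single_apply, map_add, degree_single] at hj ⊢
  split_ifs at hj ⊢ <;> constructor <;> intro <;> linarith

theorem IsDualExp.ne_zero {v k : Fin (m + 1) →₀ ℕ} {i : Fin (m + 1)}
    (h : IsDualExp m (v + single i (3 * m + 1)) k) : k i ≠ 0 := by
  intro hk
  have := h i
  simp only [coe_add, Pi.add_apply, single_eq_same, hk, mul_zero] at this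
  omega

theorem exists_isDualExp_add_single_iff (v : Fin (m + 1) →₀ ℕ) (i : Fin (m + 1)) :
    (∃ k, IsDualExp m (v + single i (3 * m + 1)) k) ↔ ∃ k, IsDualExp m (v + cofactorExp i) k := by
  have hshift : v + single i (3 * m + 1) + diagExp 3
      = v + cofactorExp i + single i (3 * m + 2) := by
    rw [← cofactorExp_add_single, add_assoc, add_assoc, add_left_comm (single i _), ← single_add]
  constructor
  · rintro ⟨k, hk⟩
    refine ⟨k - single i 1, (isDualExp_add_single_iff hshift).1 ?_⟩
    rwa [tsub_add_cancel_of_le (single_le_iff.2 (Nat.one_le_iff_ne_zero.2 hk.ne_zero))]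
  · rintro ⟨k, hk⟩
    exact ⟨k + single i 1, (isDualExp_add_single_iff hshift).2 hk⟩

-- The exponent is `|k|` for any witness `k` (`IsDualExp.degree_add`).
open Classical in
noncomputable def dualWeight (m : ℕ) (u : Fin (m + 1) →₀ ℕ) : ℝ :=
  if ∃ k, IsDualExp m u k then (-3 / (3 * m + 2)) ^ (3 * m * (m + 1) - u.degree) else 0

theorem dualWeight_support_finite : (Function.support (dualWeight m)).Finite := by
  refine (finite_of_degree_le (3 * m * (m + 1))).subset fun u hu => ?_
  rw [Function.mem_support, dualWeight] at hu
  split_ifs at hu with h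
  · obtain ⟨k, hk⟩ := h
    exact Nat.le.intro hk.degree_add
  · exact absurd rfl hu

theorem dualWeight_add_single (v : Fin (m + 1) →₀ ℕ) (i : Fin (m + 1)) :
    dualWeight m (v + single i (3 * m + 1))
      = -3 / (3 * m + 2) * dualWeight m (v + cofactorExp i) := by
  unfold dualWeight
  split_ifs with h₁ h₂ h₂
  · obtain ⟨k, hk⟩ := h₂
    have hdeg := hk.degree_add
    rw [map_add, degree_cofactorExp] at hdeg
    rw [map_add, map_add, degree_single, degree_cofactorExp,
      show 3 * m * (m + 1) - (v.degree + (3 * m + 1)) = k.degree + 1 by omega,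
      show 3 * m * (m + 1) - (v.degree + (3 * m + 2)) = k.degree by omega, pow_succ, mul_comm]
  · exact absurd ((exists_isDualExp_add_single_iff v i).1 h₁) h₂
  · exact absurd ((exists_isDualExp_add_single_iff v i).2 h₂) h₁
  · rw [mul_zero]

theorem dualWeight_diagExp : dualWeight m (diagExp (3 * m)) = 1 := by
  have hrep : IsDualExp m (diagExp (3 * m)) 0 := fun j => by simp
  rw [dualWeight, if_pos ⟨0, hrep⟩, degree_diagExp]
  simp [mul_comm]

noncomputable def dualFunctional (m : ℕ) : (Fin (m + 1) →₀ ℕ) →₀ ℝ :=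
  Finsupp.ofSupportFinite (dualWeight m) dualWeight_support_finite

theorem coeffPairing_dualFunctional_mul_mvPderiv (i : Fin (m + 1))
    (g : MvPowerSeries (Fin (m + 1)) ℝ) :
    coeffPairing (dualFunctional m) (g * mvPderiv i (fExample (m + 1))) = 0 := by
  have hshifts : (3 * m + 2 : ℝ) • (dualFunctional m).comapDomain (· + single i (3 * m + 1))
        (add_left_injective _).injOn
      + (3 : ℝ) • (dualFunctional m).comapDomain (· + cofactorExp i) (add_left_injective _).injOn
      = 0 := by
    ext v
    simp only [dualFunctional, coe_add, coe_smul, Pi.add_apply, Pi.smul_apply, comapDomain_apply,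
      ofSupportFinite_coe, smul_eq_mul, coe_zero, Pi.zero_apply, dualWeight_add_single]
    field_simp
    ring
  rw [mvPderiv_fExample, mul_add, map_add, coeffPairing_mul_monomial, coeffPairing_mul_monomial]
  simpa using congrArg (coeffPairing · g) hshifts

theorem prod_X_pow_notMem_jacobianIdeal (m : ℕ) :
    (∏ i : Fin (m + 1), (X i : MvPowerSeries (Fin (m + 1)) ℝ)) ^ (3 * m)
      ∉ jacobianIdeal (fExample (m + 1)) := by
  intro hmem
  have hzero := Ideal.map_eq_zero_of_mem_span (coeffPairing (dualFunctional m))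
    (by rintro _ ⟨i, rfl⟩ g; exact coeffPairing_dualFunctional_mul_mvPderiv i g) hmem
  rw [prod_X_pow, coeffPairing_monomial, mul_one, dualFunctional, ofSupportFinite_coe,
    dualWeight_diagExp] at hzero
  exact one_ne_zero hzero

end DualFunctional

theorem stmt_7 (n : ℕ) (hn : 1 ≤ n) :
    (∏ i : Fin n, MvPowerSeries.X i) ^ (3 * n - 1) ∈ jacobianIdeal (fExample n) ∧
    (∏ i : Fin n, MvPowerSeries.X i) ^ (3 * (n - 1)) ∉ jacobianIdeal (fExample n) := by
  obtain ⟨m, rfl⟩ : ∃ m, n = m + 1 := ⟨n - 1, by omega⟩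
  rw [show 3 * (m + 1) - 1 = 3 * m + 1 + 1 by omega, pow_succ, Nat.add_sub_cancel]
  exact ⟨Ideal.mul_mem_right _ _ (prod_X_pow_mem_jacobianIdeal m),
    prod_X_pow_notMem_jacobianIdeal m⟩
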